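/- Combining both partitions: for J ∈ ℝ^{m×p}, block-diagonal PSD Λ, diagonal positive definite P₀, a partition {B_j} of rows and a partition {P_s} of columns of J, we have -log det(Jᵀ Λ J + P₀) ≥ (M−1) log det P₀ − Σ_{j=1}^M log det((J_{B_j}ᵀ Λ_{B_j} J_{B_j})_{P} + P₀), where (·)_P denotes the block-diagonal approximation over the parameter partition P. -/

import Mathlib

open Matrix

/-- Rows of `J` indexed by the finite set `s`. -/
def rowSub {m p : ℕ} (J : Matrix (Fin m) (Fin p) ℝ) (s : Finset (Fin m)) :
    Matrix {x // x ∈ s} (Fin p) ℝ :=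
  J.submatrix (fun i => i.1) id

/-- Principal submatrix of `M` indexed by the finite set `s`. -/
def principalSub {n : ℕ} (M : Matrix (Fin n) (Fin n) ℝ) (s : Finset (Fin n)) :
    Matrix {x // x ∈ s} {x // x ∈ s} ℝ :=
  M.submatrix (fun i => i.1) (fun j => j.1)

/-!
Since `Λ` vanishes between different data blocks, `JᵀΛJ = ∑ₛ Hₛ` with
`Hₛ = J_sᵀ Λ_s J_s` positive semidefinite, and `log det (· + D)` is submodular on positive
semidefinite matrices: for `A = XᴴX`, `B = YᴴY` and `K = [X; Y]`, the matrix determinant lemma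
gives `det (A + B + D) = det D · det (1 + K D⁻¹ Kᴴ)`, and Fischer's inequality bounds the latter
determinant by the product over its two diagonal blocks `1 + X D⁻¹ Xᴴ` and `1 + Y D⁻¹ Yᴴ`, i.e.
`det (A + B + D) · det D ≤ det (A + D) · det (B + D)`. Iterating over the data blocks gives the
first bound; Fischer's inequality for each `Hₛ + D` over the parameter partition gives the second.
Fischer's inequality itself comes from the Schur complement and the monotonicity of `det` in the
Loewner order.
-/

open Finset
open scoped MatrixOrder

namespace Matrix

variable {n : Type*} [DecidableEq n]

theorem PosSemidef.one_le_det_one_add [Fintype n] {M : Matrix n n ℝ} (hM : M.PosSemidef) :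
    1 ≤ (1 + M).det := by
  set U := hM.isHermitian.eigenvectorUnitary
  have hdiag : 1 + M = Unitary.conjStarAlgAut ℝ _ U (1 + diagonal hM.isHermitian.eigenvalues) := by
    rw [map_add, map_one]
    conv_lhs => rw [hM.isHermitian.spectral_theorem]
    rfl
  rw [hdiag, Unitary.conjStarAlgAut_apply, det_mul_right_comm, Unitary.mul_star_self_of_mem U.2,
    one_mul, ← diagonal_one, diagonal_add, det_diagonal]
  exact one_le_prod fun i _ => by simpa using hM.eigenvalues_nonneg i

theorem PosSemidef.det_le_det_add [Fintype n] {A N : Matrix n n ℝ} (hA : A.PosSemidef)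
    (hN : N.PosSemidef) : A.det ≤ (A + N).det := by
  rcases eq_or_ne A.det 0 with h0 | h0
  · exact h0 ▸ (hA.add hN).det_nonneg
  have hA' : A.PosDef := hA.posDef_iff_det_ne_zero.mpr h0
  obtain ⟨X, rfl⟩ := CStarAlgebra.nonneg_iff_eq_star_mul_self.mp hN.nonneg
  rw [star_eq_conjTranspose, det_add_mul _ _ h0.isUnit]
  exact le_mul_of_one_le_right hA'.det_pos.le
    (hA'.inv.posSemidef.mul_mul_conjTranspose_same X).one_le_det_one_add

theorem PosDef.det_le_det_toBlocks₁₁_mul_det_toBlocks₂₂ [Fintype n] {m : Type*} [Fintype m]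
    [DecidableEq m] {M : Matrix (n ⊕ m) (n ⊕ m) ℝ} (hM : M.PosDef) :
    M.det ≤ M.toBlocks₁₁.det * M.toBlocks₂₂.det := by
  have hA : M.toBlocks₁₁.PosDef := hM.submatrix Sum.inl_injective
  have hM' : M = fromBlocks M.toBlocks₁₁ M.toBlocks₁₂ M.toBlocks₁₂ᴴ M.toBlocks₂₂ := by
    conv_lhs => rw [← fromBlocks_toBlocks M]
    congr
    ext i j
    exact (hM.isHermitian.apply (Sum.inr i) (Sum.inl j)).symm
  let := hA.isUnit.invertible
  have hschur : (M.toBlocks₂₂ - M.toBlocks₁₂ᴴ * M.toBlocks₁₁⁻¹ * M.toBlocks₁₂).PosSemidef :=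
    (PosDef.fromBlocks₁₁ _ _ hA).mp (hM' ▸ hM.posSemidef)
  have hmono := hschur.det_le_det_add (hA.inv.posSemidef.conjTranspose_mul_mul_same M.toBlocks₁₂)
  rw [sub_add_cancel] at hmono
  conv_lhs => rw [hM', det_fromBlocks₁₁, invOf_eq_nonsing_inv]
  exact mul_le_mul_of_nonneg_left hmono hA.det_pos.le

theorem PosDef.det_submatrix_sup_le_prod {G : Matrix n n ℝ} (hG : G.PosDef)
    {S : Finset (Finset n)} (hS : (S : Set (Finset n)).PairwiseDisjoint id) :
    (G.submatrix ((↑) : ↥(S.sup id) → n) (↑)).det ≤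
      ∏ t ∈ S, (G.submatrix ((↑) : t → n) (↑)).det := by
  induction S using Finset.induction_on with
  | empty => rw [prod_empty, sup_empty, bot_eq_empty, det_isEmpty]
  | insert t S ht ih =>
    have hdisj : Disjoint t (S.sup id) := Finset.disjoint_sup_right.2 fun u hu =>
      hS (mem_insert_self t S) (mem_insert_of_mem hu) (ne_of_mem_of_not_mem hu ht).symm
    have hfischer := (hG.submatrix (Subtype.val_injective.comp
      (Equiv.Finset.union t _ hdisj).injective)).det_le_det_toBlocks₁₁_mul_det_toBlocks₂₂
    rw [sup_insert, prod_insert ht]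
    calc _ = _ := (det_submatrix_equiv_self (Equiv.Finset.union t _ hdisj)
            (G.submatrix ((↑) : ↥(t ∪ S.sup id) → n) (↑))).symm
      _ ≤ _ := hfischer
      _ ≤ _ := mul_le_mul_of_nonneg_left (ih (hS.subset (by simp)))
            (hG.submatrix Subtype.val_injective).det_pos.le

theorem PosDef.det_le_prod_det_submatrix_parts [Fintype n] {G : Matrix n n ℝ} (hG : G.PosDef)
    (P : Finpartition (univ : Finset n)) :
    G.det ≤ ∏ t ∈ P.parts, (G.submatrix ((↑) : t → n) (↑)).det := by
  have := hG.det_submatrix_sup_le_prod P.supIndep.pairwiseDisjoint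
  rw [P.sup_parts] at this
  exact (det_submatrix_equiv_self (Equiv.subtypeUnivEquiv mem_univ) G).symm.trans_le this

theorem det_conjTranspose_mul_self_add [Fintype n] {m R : Type*} [Fintype m] [DecidableEq m]
    [CommRing R] [StarRing R] {D : Matrix n n R} (hD : IsUnit D.det) (K : Matrix m n R) :
    (Kᴴ * K + D).det = D.det * (1 + K * D⁻¹ * Kᴴ).det := by
  rw [add_comm, det_add_mul _ _ hD]

theorem PosDef.det_add_add_mul_det_le [Fintype n] {D A B : Matrix n n ℝ} (hD : D.PosDef)
    (hA : A.PosSemidef) (hB : B.PosSemidef) :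
    (A + B + D).det * D.det ≤ (A + D).det * (B + D).det := by
  obtain ⟨X, rfl⟩ := CStarAlgebra.nonneg_iff_eq_star_mul_self.mp hA.nonneg
  obtain ⟨Y, rfl⟩ := CStarAlgebra.nonneg_iff_eq_star_mul_self.mp hB.nonneg
  have hD' : IsUnit D.det := hD.det_pos.ne'.isUnit
  have hK : (fromRows X Y)ᴴ * fromRows X Y = Xᴴ * X + Yᴴ * Y := by
    rw [conjTranspose_fromRows_eq_fromCols_conjTranspose, fromCols_mul_fromRows]
  have hblocks : 1 + fromRows X Y * D⁻¹ * (fromRows X Y)ᴴ =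
      fromBlocks (1 + X * D⁻¹ * Xᴴ) (X * D⁻¹ * Yᴴ) (Y * D⁻¹ * Xᴴ) (1 + Y * D⁻¹ * Yᴴ) := by
    rw [conjTranspose_fromRows_eq_fromCols_conjTranspose, fromRows_mul, fromRows_mul_fromCols,
      ← fromBlocks_one, fromBlocks_add, zero_add, zero_add]
  have hfischer := (hblocks ▸ PosDef.one.add_posSemidef (hD.inv.posSemidef.mul_mul_conjTranspose_same
    (fromRows X Y))).det_le_det_toBlocks₁₁_mul_det_toBlocks₂₂
  rw [toBlocks_fromBlocks₁₁, toBlocks_fromBlocks₂₂] at hfischer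
  simp only [star_eq_conjTranspose]
  rw [← hK, det_conjTranspose_mul_self_add hD', det_conjTranspose_mul_self_add hD',
    det_conjTranspose_mul_self_add hD', hblocks]
  linarith [mul_le_mul_of_nonneg_left hfischer (mul_self_nonneg D.det)]

theorem PosDef.log_det_sum_add_le [Fintype n] {ι : Type*} {D : Matrix n n ℝ} (hD : D.PosDef)
    {H : ι → Matrix n n ℝ} (S : Finset ι) (hH : ∀ i ∈ S, (H i).PosSemidef) :
    Real.log (∑ i ∈ S, H i + D).det + S.card * Real.log D.det ≤
      Real.log D.det + ∑ i ∈ S, Real.log (H i + D).det := by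
  classical
  induction S using Finset.induction_on with
  | empty => simp
  | insert a S ha ih =>
    have hHa := hH a (mem_insert_self a S)
    have hS := posSemidef_sum S fun i hi => hH i (mem_insert_of_mem hi)
    have hpos {A : Matrix n n ℝ} (hA : A.PosSemidef) : 0 < (A + D).det :=
      (PosDef.posSemidef_add hA hD).det_pos
    have key := Real.log_le_log (mul_pos (hpos (hHa.add hS)) hD.det_pos)
      (hD.det_add_add_mul_det_le hHa hS)
    rw [Real.log_mul (hpos (hHa.add hS)).ne' hD.det_pos.ne',
      Real.log_mul (hpos hHa).ne' (hpos hS).ne'] at key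
    rw [sum_insert ha, sum_insert ha, card_insert_of_notMem ha, Nat.cast_succ]
    linarith [ih fun i hi => hH i (mem_insert_of_mem hi)]

theorem transpose_mul_mul_eq_sum_parts {m p R : Type*} [Fintype m] [DecidableEq m]
    [NonUnitalNonAssocSemiring R] (J : Matrix m p R) (Λ : Matrix m m R)
    (B : Finpartition (univ : Finset m))
    (hΛ : ∀ i j : m, (∀ s ∈ B.parts, i ∈ s → j ∉ s) → Λ i j = 0) :
    Jᵀ * Λ * J = ∑ s ∈ B.parts, (J.submatrix ((↑) : s → m) id : Matrix s p R)ᵀ *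
      (Λ.submatrix (↑) (↑) : Matrix s s R) * (J.submatrix (↑) id : Matrix s p R) := by
  ext a b
  have hrow : ∀ s ∈ B.parts, ∀ j ∈ s, ∑ i, J i a * Λ i j = ∑ i ∈ s, J i a * Λ i j := by
    intro s hs j hj
    refine (sum_subset (subset_univ s) fun i _ hi => ?_).symm
    rw [hΛ i j fun s' hs' his' hjs' => hi (B.eq_of_mem_parts hs' hs hjs' hj ▸ his'), mul_zero]
  calc (Jᵀ * Λ * J) a b = ∑ j, (∑ i, J i a * Λ i j) * J j b := by
        simp only [mul_apply, transpose_apply]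
    _ = ∑ s ∈ B.parts, ∑ j ∈ s, (∑ i, J i a * Λ i j) * J j b := by
        have := sum_biUnion (f := fun j => (∑ i, J i a * Λ i j) * J j b)
          B.supIndep.pairwiseDisjoint
        rwa [B.biUnion_parts] at this
    _ = _ := by
        rw [Matrix.sum_apply]
        refine sum_congr rfl fun s hs => ?_
        simp only [mul_apply, transpose_apply, submatrix_apply, id]
        rw [← sum_coe_sort s]
        exact sum_congr rfl fun j _ => by rw [hrow s hs j j.2, ← sum_coe_sort s]

end Matrix

theorem parametric_doubly_lower_bound {m p : ℕ}
    (J : Matrix (Fin m) (Fin p) ℝ) (Λ : Matrix (Fin m) (Fin m) ℝ)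
    (d : Fin p → ℝ) (hd : ∀ i, 0 < d i)
    (hΛ : Λ.PosSemidef)
    (B : Finpartition (Finset.univ : Finset (Fin m)))
    (hblock : ∀ i j : Fin m, (∀ s ∈ B.parts, i ∈ s → j ∉ s) → Λ i j = 0)
    (P : Finpartition (Finset.univ : Finset (Fin p))) :
    -Real.log (Jᵀ * Λ * J + Matrix.diagonal d).det ≥
      ((B.parts.card : ℝ) - 1) * Real.log (Matrix.diagonal d).det -
        ∑ s ∈ B.parts, ∑ t ∈ P.parts,
          Real.log ((principalSub ((rowSub J s)ᵀ * principalSub Λ s * rowSub J s) t +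
            principalSub (Matrix.diagonal d) t).det) := by
  set D := diagonal d
  set H : Finset (Fin m) → Matrix (Fin p) (Fin p) ℝ :=
    fun s => (rowSub J s)ᵀ * principalSub Λ s * rowSub J s
  have hD : D.PosDef := PosDef.diagonal hd
  have hH (s : Finset (Fin m)) : (H s).PosSemidef :=
    (hΛ.submatrix _).conjTranspose_mul_mul_same (rowSub J s)
  have hsum : Jᵀ * Λ * J = ∑ s ∈ B.parts, H s := transpose_mul_mul_eq_sum_parts J Λ B hblock
  have hdata := hD.log_det_sum_add_le B.parts fun s _ => hH s
  have hparam (s : Finset (Fin m)) : Real.log (H s + D).det ≤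
      ∑ t ∈ P.parts, Real.log (principalSub (H s) t + principalSub D t).det := by
    have hG := PosDef.posSemidef_add (hH s) hD
    exact (Real.log_le_log hG.det_pos (hG.det_le_prod_det_submatrix_parts P)).trans_eq
      (Real.log_prod fun t _ => (hG.submatrix Subtype.val_injective).det_pos.ne')
  rw [hsum]
  linarith [sum_le_sum fun s (_ : s ∈ B.parts) => hparam s]
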